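/- If a collection of 1-Lipschitz functions (f₁, …, f_s) on ℤ_m is uniform with each suffix, then so is (f₁ + z₁, …, f_s + z_s) for arbitrary integer constants z₁, …, z_s. -/

import Mathlib

open MeasureTheory ProbabilityTheory Filter

/-- The ring `ℤ_m` of `m`-adic integers, modelled as base-`m` digit sequences. -/
abbrev Zm (m : ℕ) := ℕ → Fin m

/-- `ω mod m^n`: the natural number formed by the first `n` base-`m` digits of `ω`. -/
def modPow {m : ℕ} (ω : Zm m) (n : ℕ) : ℕ :=
  ∑ i ∈ Finset.range n, (ω i).val * m ^ i

/-- `f : ℤ_m → ℤ_m` is 1-Lipschitz: the first `n` digits of `f ω` depend only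
on the first `n` digits of `ω`. -/
def Lip1 {m : ℕ} (f : Zm m → Zm m) : Prop :=
  ∀ (n : ℕ) (ω₁ ω₂ : Zm m), modPow ω₁ n = modPow ω₂ n → modPow (f ω₁) n = modPow (f ω₂) n

/-- `μ` is the normalized Haar measure on `ℤ_m`: every ball
`{ω : ω mod m^k = a}` has measure `m^{-k}`. -/
def IsHaar {m : ℕ} (μ : Measure (Zm m)) : Prop :=
  ∀ (k a : ℕ), a < m ^ k → μ {ω | modPow ω k = a} = ((m : ENNReal) ^ k)⁻¹

/-- The vector `φₙ(ω) = ((f₁(ω) mod m^n)/m^n, …, (f_s(ω) mod m^n)/m^n)`. -/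
noncomputable def phi {m s : ℕ} (f : Fin s → Zm m → Zm m) (n : ℕ) (ω : Zm m) :
    Fin s → ℝ :=
  fun i => (modPow (f i ω) n : ℝ) / (m : ℝ) ^ n

/-- The cube `J_k(a) = ∏ᵢ [aᵢ/m^k, (aᵢ+1)/m^k) ⊂ [0,1)^s`. -/
def Jcube (m k : ℕ) {s : ℕ} (a : Fin s → ℕ) : Set (Fin s → ℝ) :=
  {x | ∀ i, (a i : ℝ) / (m : ℝ) ^ k ≤ x i ∧ x i < ((a i : ℝ) + 1) / (m : ℝ) ^ k}

/-- The suffix event `ξ_d = β`, i.e. `ω mod m^d = β`. -/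
def suffixEvent (m d β : ℕ) : Set (Zm m) := {ω | modPow ω d = β}

/-- The uniform (Lebesgue) probability distribution on the cube `[0,1)^s`. -/
noncomputable def unifCube (s : ℕ) : Measure (Fin s → ℝ) :=
  volume.restrict (Set.univ.pi fun _ => Set.Ico (0 : ℝ) 1)

/-- The collection `f₁,…,f_s` generates a uniform distribution: `φₙ` converges
weakly to the uniform distribution on `[0,1)^s`. -/
def GeneratesUniform {m s : ℕ} (μ : Measure (Zm m)) (f : Fin s → Zm m → Zm m) : Prop :=
  ∀ g : BoundedContinuousFunction (Fin s → ℝ) ℝ,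
    Tendsto (fun n => ∫ ω, g (phi f n ω) ∂μ) atTop (nhds (∫ x, g x ∂(unifCube s)))

/-- The collection `f₁,…,f_s` is uniform with each suffix: conditionally on
`ξ_d = β`, the probability that `φₙ` hits any cube `J_k(a)` tends to `m^{-ks}`. -/
def UniformWithSuffix {m s : ℕ} (μ : Measure (Zm m)) (f : Fin s → Zm m → Zm m) : Prop :=
  ∀ (k d : ℕ) (a : Fin s → ℕ), (∀ i, a i < m ^ k) → ∀ β < m ^ d,
    Tendsto
      (fun n => ProbabilityTheory.cond μ (suffixEvent m d β) {ω | phi f n ω ∈ Jcube m k a})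
      atTop (nhds (((m : ENNReal) ^ (k * s))⁻¹))

/-- Addition of an integer constant `z` to an `m`-adic integer `ω`, defined
digitwise: the `i`-th digit of `ω + z` is the `i`-th base-`m` digit of the
least nonnegative residue of `(ω mod m^(i+1)) + z` modulo `m^(i+1)`. -/
def addInt (m : ℕ) [NeZero m] (ω : Zm m) (z : ℤ) : Zm m :=
  fun i => ⟨(((modPow ω (i + 1) : ℤ) + z) % (m : ℤ) ^ (i + 1)).toNat / m ^ i % m,
    Nat.mod_lt _ (Nat.pos_of_ne_zero (NeZero.ne m))⟩

open scoped ENNReal Topology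
open Finset

/-! Write `x = f_i(ω) mod m^n` and `p = m^(n-k)`. Adding `z_i` to `x` (mod `m^n`) leaves `x / p`,
the top `k` digits, unchanged unless `x` lies within `|z_i|` of a multiple of `p`; so the events
`φₙ(f + z) ∈ J_k(a)` and `φₙ(f) ∈ J_k(a)` differ only on this "near-grid" event. Once
`m^(n-k-t) ≥ |z_i|`, the near-grid event is covered by the level-`(k+t)` cubes whose `i`-th index
is adjacent to a level-`k` endpoint; by uniformity of `f` their total mass tends to at most
`2 m^(-t)`, so the near-grid event has vanishing measure and the two limits agree. -/

theorem Int.add_emod_ediv_eq_ediv {x z p R : ℤ} (hpR : p ∣ R) (hx₀ : 0 ≤ x) (hxR : x < R)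
    (hlo : |z| ≤ x % p) (hhi : x % p + |z| < p) : (x + z) % R / p = x / p := by
  have hp : 0 < p := by
    rcases eq_or_ne p 0 with rfl | hp
    · simp only [Int.emod_zero] at hhi; linarith [abs_nonneg z]
    · linarith [abs_nonneg z, Int.emod_nonneg x hp]
  obtain ⟨c, rfl⟩ := hpR
  have hdecomp := Int.emod_add_mul_ediv x p
  have hq : x / p + 1 ≤ c := by
    have : p * (x / p) < p * c := by linarith [Int.emod_nonneg x hp.ne']
    linarith [lt_of_mul_lt_mul_left this hp.le]
  have hz₁ := neg_abs_le z
  have hz₂ := le_abs_self z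
  have hpc : p * (x / p + 1) ≤ p * c := mul_le_mul_of_nonneg_left hq hp.le
  have hq₀ : 0 ≤ p * (x / p) := mul_nonneg hp.le (Int.ediv_nonneg hx₀ hp.le)
  rw [Int.emod_eq_of_lt (by linarith) (by linarith)]
  exact ((Int.ediv_emod_unique (r := x % p + z) hp).mpr
    ⟨by linarith, by linarith, by linarith⟩).1

section ModPow

variable {m : ℕ}

lemma modPow_succ (ω : Zm m) (n : ℕ) : modPow ω (n + 1) = modPow ω n + (ω n).val * m ^ n :=
  sum_range_succ _ _

lemma modPow_lt (ω : Zm m) (n : ℕ) : modPow ω n < m ^ n := by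
  induction n with
  | zero => simp [modPow]
  | succ n ih =>
    have hdigit : (ω n).val + 1 ≤ m := (ω n).isLt
    calc modPow ω (n + 1) = modPow ω n + (ω n).val * m ^ n := modPow_succ ω n
      _ < m ^ n + (ω n).val * m ^ n := by omega
      _ = ((ω n).val + 1) * m ^ n := by ring
      _ ≤ m * m ^ n := Nat.mul_le_mul_right _ hdigit
      _ = m ^ (n + 1) := (pow_succ' m n).symm

lemma modPow_addInt [NeZero m] (ω : Zm m) (z : ℤ) (n : ℕ) :
    (modPow (addInt m ω z) n : ℤ) = ((modPow ω n : ℤ) + z) % (m : ℤ) ^ n := by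
  induction n with
  | zero => simp [modPow]
  | succ n ih =>
    have hm : (0 : ℤ) < m := by exact_mod_cast NeZero.pos m
    set N : ℤ := ((modPow ω (n + 1) : ℤ) + z) % (m : ℤ) ^ (n + 1)
    have hN : (N.toNat : ℤ) = N := Int.toNat_of_nonneg (Int.emod_nonneg _ (by positivity))
    have hNlt : N.toNat < m ^ (n + 1) := by
      have : N < (m : ℤ) ^ (n + 1) := Int.emod_lt_of_pos _ (pow_pos hm (n + 1))
      exact_mod_cast hN ▸ this
    have hlow : modPow (addInt m ω z) n = N.toNat % m ^ n := by
      have : (modPow (addInt m ω z) n : ℤ) = N % (m : ℤ) ^ n := by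
        rw [ih, Int.emod_emod_of_dvd _ (pow_dvd_pow _ n.le_succ), modPow_succ]
        push_cast
        rw [add_right_comm, Int.add_mul_emod_self_right]
      exact_mod_cast hN ▸ this
    have htop : (addInt m ω z n).val = N.toNat / m ^ n % m := rfl
    rw [modPow_succ, hlow, htop, mul_comm, ← Nat.mod_mul, ← pow_succ, Nat.mod_eq_of_lt hNlt]
    omega

lemma modPow_addInt_div [NeZero m] (ω : Zm m) (z : ℤ) {n j : ℕ} (hj : j ≤ n)
    (hlo : z.natAbs ≤ modPow ω n % m ^ j) (hhi : modPow ω n % m ^ j + z.natAbs < m ^ j) :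
    modPow (addInt m ω z) n / m ^ j = modPow ω n / m ^ j := by
  zify at hlo hhi ⊢
  rw [modPow_addInt]
  exact Int.add_emod_ediv_eq_ediv (pow_dvd_pow _ hj) (by positivity)
    (by exact_mod_cast modPow_lt ω n) hlo hhi

lemma mem_Jcube_iff {s k n : ℕ} (hm : 0 < m) (hkn : k ≤ n) (g : Fin s → Zm m → Zm m)
    (a : Fin s → ℕ) (ω : Zm m) :
    phi g n ω ∈ Jcube m k a ↔ ∀ i, modPow (g i ω) n / m ^ (n - k) = a i := by
  refine forall_congr' fun i => ?_
  have hmk : (0 : ℝ) < (m : ℝ) ^ k := by positivity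
  have hsplit : (modPow (g i ω) n : ℝ) / (m : ℝ) ^ n
      = ((modPow (g i ω) n : ℕ) / ((m ^ (n - k) : ℕ) : ℝ)) / (m : ℝ) ^ k := by
    rw [div_div, Nat.cast_pow, ← pow_add, Nat.sub_add_cancel hkn]
  rw [phi, hsplit, div_le_div_iff_of_pos_right hmk, div_lt_div_iff_of_pos_right hmk,
    ← Nat.floor_div_eq_div (K := ℝ), Nat.floor_eq_iff (by positivity)]

end ModPow

/-- Cut each of `q` consecutive intervals into `M` subintervals: the indices of the subintervals
at either end of an interval. -/
def boundaryIndices (M q : ℕ) : Finset ℕ :=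
  (range q).biUnion fun a => {a * M, a * M + (M - 1)}

lemma card_boundaryIndices_le (M q : ℕ) : (boundaryIndices M q).card ≤ 2 * q :=
  card_biUnion_le.trans <| by
    simpa [mul_comm] using sum_le_sum fun a (_ : a ∈ range q) => card_le_two (a := a * M)

lemma lt_of_mem_boundaryIndices {M q b : ℕ} (hM : 0 < M) (hb : b ∈ boundaryIndices M q) :
    b < M * q := by
  obtain ⟨a, ha, hb⟩ := mem_biUnion.mp hb
  have : a * M + M ≤ M * q := by nlinarith [mem_range.mp ha]
  rcases mem_insert.mp hb with rfl | hb
  · omega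
  · rw [mem_singleton.mp hb]; omega

lemma div_mem_boundaryIndices {x u M q c : ℕ} (hx : x < u * M * q) (hc : c ≤ u)
    (hnear : x % (u * M) < c ∨ u * M ≤ x % (u * M) + c) : x / u ∈ boundaryIndices M q := by
  have hu : 0 < u := Nat.pos_of_ne_zero (by rintro rfl; simp at hx)
  have hM : 0 < M := Nat.pos_of_ne_zero (by rintro rfl; simp at hx)
  have hsplit : x / u = x / (u * M) * M + x % (u * M) / u := by
    rw [Nat.mod_mul_right_div_self, ← Nat.div_div_eq_div_mul, Nat.div_add_mod']
  refine mem_biUnion.mpr ⟨x / (u * M), mem_range.mpr (Nat.div_lt_of_lt_mul hx), ?_⟩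
  rw [hsplit]
  rcases hnear with hnear | hnear
  · simp [Nat.div_eq_of_lt (hnear.trans_le hc)]
  · have hlt : x % (u * M) < u * M := Nat.mod_lt _ (Nat.mul_pos hu hM)
    have hM' : (M - 1) * u + u = u * M := by
      rw [← add_one_mul, Nat.sub_one_add_one hM.ne', mul_comm]
    have : x % (u * M) / u = M - 1 :=
      Nat.div_eq_of_lt_le (by omega) (by rwa [Nat.sub_one_add_one hM.ne', mul_comm M u])
    simp [this]

def indexSlab {s : ℕ} (i : Fin s) (N : ℕ) (T : Finset ℕ) : Finset (Fin s → ℕ) :=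
  Fintype.piFinset (Function.update (fun _ => range N) i T)

lemma lt_of_mem_indexSlab {s N : ℕ} {i : Fin s} {T : Finset ℕ} (hT : ∀ x ∈ T, x < N)
    {b : Fin s → ℕ} (hb : b ∈ indexSlab i N T) (j : Fin s) : b j < N := by
  have := Fintype.mem_piFinset.mp hb j
  rcases eq_or_ne j i with rfl | hj
  · exact hT _ (by rwa [Function.update_self] at this)
  · rwa [Function.update_of_ne hj, mem_range] at this

lemma card_indexSlab {s : ℕ} (i : Fin s) (N : ℕ) (T : Finset ℕ) :
    (indexSlab i N T).card = T.card * N ^ (s - 1) := by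
  rw [indexSlab, Fintype.card_piFinset, Fintype.prod_eq_mul_prod_compl i, Function.update_self,
    prod_congr rfl fun j hj => by rw [Function.update_of_ne (by simpa using hj), card_range],
    prod_const, card_compl, card_singleton, Fintype.card_fin]

lemma card_indexSlab_boundaryIndices_mul_inv_le {s m : ℕ} (hm : m ≠ 0) (i : Fin s) (k t : ℕ) :
    ((indexSlab i (m ^ (k + t)) (boundaryIndices (m ^ t) (m ^ k))).card : ℝ≥0∞)
      * ((m : ℝ≥0∞) ^ ((k + t) * s))⁻¹ ≤ 2 * ((m : ℝ≥0∞) ^ t)⁻¹ := by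
  have hm₀ : (m : ℝ≥0∞) ^ t ≠ 0 := pow_ne_zero _ (by exact_mod_cast hm)
  have htop : ∀ j, (m : ℝ≥0∞) ^ j ≠ ⊤ := fun j => ENNReal.pow_ne_top (ENNReal.natCast_ne_top m)
  have hcard : (indexSlab i (m ^ (k + t)) (boundaryIndices (m ^ t) (m ^ k))).card * m ^ t
      ≤ 2 * m ^ ((k + t) * s) := by
    rw [card_indexSlab]
    calc _ ≤ 2 * m ^ k * (m ^ (k + t)) ^ (s - 1) * m ^ t := by
          gcongr; exact card_boundaryIndices_le _ _
      _ = 2 * ((m ^ (k + t)) ^ (s - 1) * m ^ (k + t)) := by ring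
      _ = 2 * m ^ ((k + t) * s) := by rw [pow_sub_one_mul i.pos.ne', pow_mul]
  rw [ENNReal.mul_inv_le_iff (pow_ne_zero _ (by exact_mod_cast hm)) (htop _), mul_right_comm,
    ← div_eq_mul_inv, ENNReal.le_div_iff_mul_le (Or.inl hm₀) (Or.inl (htop t))]
  exact_mod_cast hcard

lemma tendsto_measure_of_forall_notMem_iff {α ι : Type*} [MeasurableSpace α] {ν : Measure α}
    {l : Filter ι} {E F D : ι → Set α} {L : ℝ≥0∞} (hF : Tendsto (fun n => ν (F n)) l (𝓝 L))
    (hD : Tendsto (fun n => ν (D n)) l (𝓝 0)) (hEF : ∀ᶠ n in l, ∀ ω ∉ D n, ω ∈ E n ↔ ω ∈ F n) :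
    Tendsto (fun n => ν (E n)) l (𝓝 L) := by
  have hle : ∀ {A B C : Set α}, (∀ ω ∉ C, ω ∈ A → ω ∈ B) → ν A ≤ ν B + ν C := fun {_ _ C} h =>
    (measure_mono fun ω hω => (em (ω ∈ C)).elim Or.inr fun hC => Or.inl (h ω hC hω)).trans
      (measure_union_le _ _)
  refine tendsto_of_tendsto_of_tendsto_of_le_of_le'
    (by simpa using ENNReal.Tendsto.sub hF hD (Or.inr ENNReal.zero_ne_top))
    (by simpa using hF.add hD) ?_ ?_
  · filter_upwards [hEF] with n h
    exact tsub_le_iff_right.mpr (hle fun ω hω => (h ω hω).2)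
  · filter_upwards [hEF] with n h
    exact hle fun ω hω => (h ω hω).1

section Uniform

variable {m s : ℕ}

/-- `UniformWithSuffix μ f` is this property for every `ν = cond μ (suffixEvent m d β)`. -/
def IsAsymptoticallyUniform (ν : Measure (Zm m)) (f : Fin s → Zm m → Zm m) : Prop :=
  ∀ (k : ℕ) (a : Fin s → ℕ), (∀ i, a i < m ^ k) →
    Tendsto (fun n => ν {ω | phi f n ω ∈ Jcube m k a}) atTop (𝓝 ((m : ℝ≥0∞) ^ (k * s))⁻¹)

def nearGrid (f : Fin s → Zm m → Zm m) (i : Fin s) (k c n : ℕ) : Set (Zm m) :=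
  {ω | modPow (f i ω) n % m ^ (n - k) < c ∨ m ^ (n - k) ≤ modPow (f i ω) n % m ^ (n - k) + c}

lemma nearGrid_subset (hm : 0 < m) (f : Fin s → Zm m → Zm m) (i : Fin s) {k t c n : ℕ}
    (hn : k + t ≤ n) (hc : c ≤ m ^ (n - (k + t))) :
    nearGrid f i k c n ⊆ ⋃ b ∈ indexSlab i (m ^ (k + t)) (boundaryIndices (m ^ t) (m ^ k)),
      {ω | phi f n ω ∈ Jcube m (k + t) b} := by
  have hsplit : m ^ (n - (k + t)) * m ^ t = m ^ (n - k) := by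
    rw [← pow_add]; congr 1; omega
  have hfull : m ^ (n - (k + t)) * m ^ (k + t) = m ^ n := by
    rw [← pow_add]; congr 1; omega
  intro ω hω
  refine Set.mem_iUnion₂.mpr ⟨fun j => modPow (f j ω) n / m ^ (n - (k + t)),
    Fintype.mem_piFinset.mpr fun j => ?_, (mem_Jcube_iff hm hn f _ ω).mpr fun j => rfl⟩
  rcases eq_or_ne j i with rfl | hj
  · rw [Function.update_self]
    refine div_mem_boundaryIndices ?_ hc (by rwa [hsplit])
    rw [hsplit, ← pow_add, Nat.sub_add_cancel (by omega)]
    exact modPow_lt _ n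
  · rw [Function.update_of_ne hj, mem_range]
    exact Nat.div_lt_of_lt_mul (hfull ▸ modPow_lt _ n)

variable {ν : Measure (Zm m)} {f : Fin s → Zm m → Zm m}

lemma IsAsymptoticallyUniform.tendsto_measure_nearGrid (hm : 1 < m)
    (hf : IsAsymptoticallyUniform ν f) (i : Fin s) (k c : ℕ) :
    Tendsto (fun n => ν (nearGrid f i k c n)) atTop (𝓝 0) := by
  rw [ENNReal.tendsto_nhds_zero]
  intro ε hε
  obtain ⟨t, ht⟩ : ∃ t, 2 * ((m : ℝ≥0∞) ^ t)⁻¹ < ε := by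
    have hgeom := ENNReal.tendsto_pow_atTop_nhds_zero_of_lt_one
      (ENNReal.inv_lt_one.mpr (by exact_mod_cast hm : (1 : ℝ≥0∞) < m))
    have := ENNReal.Tendsto.const_mul (a := 2) hgeom (Or.inr ENNReal.ofNat_ne_top)
    simp only [mul_zero, ← ENNReal.inv_pow] at this
    exact (this.eventually (gt_mem_nhds hε)).exists
  set B := indexSlab i (m ^ (k + t)) (boundaryIndices (m ^ t) (m ^ k))
  have hB : ∀ b ∈ B, ∀ j, b j < m ^ (k + t) := fun b hb => lt_of_mem_indexSlab (fun x hx => by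
    rw [pow_add, mul_comm]; exact lt_of_mem_boundaryIndices (by positivity) hx) hb
  have hsum : Tendsto (fun n => ∑ b ∈ B, ν {ω | phi f n ω ∈ Jcube m (k + t) b}) atTop
      (𝓝 (B.card * ((m : ℝ≥0∞) ^ ((k + t) * s))⁻¹)) := by
    simpa [sum_const, nsmul_eq_mul] using tendsto_finsetSum B fun b hb => hf _ b (hB b hb)
  have hlim := card_indexSlab_boundaryIndices_mul_inv_le (show m ≠ 0 by omega) i k t
  filter_upwards [hsum.eventually (gt_mem_nhds (hlim.trans_lt ht)),
    eventually_ge_atTop (k + t + c)] with n hsum_lt hn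
  calc ν (nearGrid f i k c n)
      ≤ ν (⋃ b ∈ B, {ω | phi f n ω ∈ Jcube m (k + t) b}) :=
        measure_mono (nearGrid_subset (by omega) f i (by omega)
          ((show c ≤ n - (k + t) by omega).trans (Nat.lt_pow_self hm).le))
    _ ≤ ∑ b ∈ B, ν {ω | phi f n ω ∈ Jcube m (k + t) b} := measure_biUnion_finset_le _ _
    _ ≤ ε := hsum_lt.le

theorem IsAsymptoticallyUniform.addInt [NeZero m] (hm : 1 < m) (hf : IsAsymptoticallyUniform ν f)
    (z : Fin s → ℤ) : IsAsymptoticallyUniform ν (fun i ω => addInt m (f i ω) (z i)) := by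
  intro k a ha
  refine tendsto_measure_of_forall_notMem_iff (hf k a ha)
    (D := fun n => ⋃ i, nearGrid f i k (z i).natAbs n) ?_ ?_
  · have := tendsto_finsetSum univ fun i _ => hf.tendsto_measure_nearGrid hm i k (z i).natAbs
    rw [sum_const_zero] at this
    exact tendsto_of_tendsto_of_tendsto_of_le_of_le tendsto_const_nhds this (fun _ => bot_le)
      fun n => measure_iUnion_fintype_le ν _
  · filter_upwards [eventually_ge_atTop k] with n hn ω hω
    simp only [Set.mem_iUnion, not_exists, nearGrid, Set.mem_ofPred_eq, not_or, not_lt,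
      not_le] at hω
    simp only [mem_Jcube_iff (NeZero.pos m) hn]
    exact forall_congr' fun i => by
      rw [modPow_addInt_div (f i ω) (z i) (Nat.sub_le n k) (hω i).1 (hω i).2]

end Uniform

theorem stmt15_general (m s : ℕ) (hm : 1 < m) [NeZero m]
    (μ : Measure (Zm m))
    (f : Fin s → Zm m → Zm m)
    (h : UniformWithSuffix μ f) (z : Fin s → ℤ) :
    UniformWithSuffix μ (fun i ω => addInt m (f i ω) (z i)) :=
  fun k d a ha β hβ => IsAsymptoticallyUniform.addInt hm (fun k a ha => h k d a ha β hβ) z k a ha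

/-- If `(f₁,…,f_s)` is uniform with each suffix, then so is
`(f₁ + z₁, …, f_s + z_s)` for arbitrary integer constants `z₁,…,z_s`. -/
theorem stmt15 (m s : ℕ) (hm : 1 < m) (hs : 1 ≤ s) [NeZero m]
    (μ : Measure (Zm m)) [IsProbabilityMeasure μ] (hμ : IsHaar μ)
    (f : Fin s → Zm m → Zm m) (hf : ∀ i, Lip1 (f i))
    (h : UniformWithSuffix μ f) (z : Fin s → ℤ) :
    UniformWithSuffix μ (fun i ω => addInt m (f i ω) (z i)) :=
  stmt15_general m s hm μ f h z
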